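/- arXiv:2305.13146 — 5 statements merged into one kernel-verified Lean document; each statement's English description precedes it below -/
import Mathlib

section
/- Let f : ℝ^d → ℝ be integrable with ∫ |f(x)| |x|^β dx < ∞ for some β ∈ (1,2] and ∫ x f(x) dx = 0. Then for every θ ∈ [0,1] and every α ∈ [θ,β] there exists a constant c > 0 such that |f̂(x₁ - x₂) - f̂(-x₂)| ≤ c · min(|x₁|^α + |x₁|^θ |x₂|^{α-θ}, 1) for all x₁, x₂ ∈ ℝ^d. -/
open MeasureTheory
open scoped RealInnerProductSpace


lemma expB (t γ : ℝ) (h0 : 0 ≤ γ) (h1 : γ ≤ 1) :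
    ‖Complex.exp (Complex.I * t) - 1‖ ≤ 2 * |t| ^ γ := by
  rcases le_or_gt |t| 1 with h | h
  · rcases eq_or_ne t 0 with rfl | ht
    · simp [Real.rpow_nonneg]
    have hb := Complex.exp_bound (x := Complex.I * t) (by simpa [abs_of_nonneg] using h) one_pos
    simp only [Finset.range_one, Finset.sum_singleton, pow_zero, Nat.factorial_zero,
      Nat.cast_one, div_one] at hb
    have habs : ‖Complex.I * (t:ℂ)‖ = |t| := by simp
    rw [habs] at hb
    norm_num [Nat.factorial] at hb
    have hb2 : ‖Complex.exp (Complex.I * t) - 1‖ ≤ 2 * |t| := by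
      linarith
    have hmono : |t| ^ (1:ℝ) ≤ |t| ^ γ :=
      Real.rpow_le_rpow_of_exponent_ge (abs_pos.mpr ht) h h1
    rw [Real.rpow_one] at hmono
    linarith
  · have hn : ‖Complex.exp (Complex.I * t)‖ = 1 := by
      simp [Complex.norm_exp]
    have h1' : (1:ℝ) ≤ |t| ^ γ := Real.one_le_rpow h.le h0
    calc ‖Complex.exp (Complex.I * t) - 1‖ ≤ ‖Complex.exp (Complex.I * t)‖ + ‖(1:ℂ)‖ :=
          norm_sub_le _ _
      _ ≤ 2 := by rw [hn]; norm_num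
      _ ≤ 2 * |t| ^ γ := by linarith

lemma expA (t α : ℝ) (h1 : 1 ≤ α) (h2 : α ≤ 2) :
    ‖Complex.exp (Complex.I * t) - 1 - Complex.I * t‖ ≤ 3 * |t| ^ α := by
  rcases le_or_gt |t| 1 with h | h
  · rcases eq_or_ne t 0 with rfl | ht
    · simp [Real.rpow_nonneg]
    have hb := Complex.exp_bound (x := Complex.I * t) (by simpa [abs_of_nonneg] using h) two_pos
    have hs : ∑ m ∈ Finset.range 2, (Complex.I * t) ^ m / m.factorial = 1 + Complex.I * t := by
      simp [Finset.sum_range_succ]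
    rw [hs] at hb
    have habs : ‖Complex.I * (t:ℂ)‖ = |t| := by simp
    rw [habs] at hb
    norm_num [Nat.factorial] at hb
    have hb2 : ‖Complex.exp (Complex.I * t) - 1 - Complex.I * t‖ ≤ 3/4 * t ^ 2 := by
      have e : Complex.exp (Complex.I * t) - 1 - Complex.I * t
          = Complex.exp (Complex.I * t) - (1 + Complex.I * t) := by ring
      rw [e]; linarith
    have hpow : |t| ^ (2:ℕ) ≤ |t| ^ α := by
      rw [← Real.rpow_natCast |t| 2]
      exact Real.rpow_le_rpow_of_exponent_ge (abs_pos.mpr ht) h (by exact_mod_cast h2)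
    have h3 : (0:ℝ) ≤ |t| ^ α := Real.rpow_nonneg (abs_nonneg _) _
    nlinarith [hb2, hpow, sq_abs t]
  · have hn : ‖Complex.exp (Complex.I * t)‖ = 1 := by
      simp [Complex.norm_exp]
    have h1' : |t| ≤ |t| ^ α := by
      calc |t| = |t| ^ (1:ℝ) := (Real.rpow_one _).symm
        _ ≤ |t| ^ α := Real.rpow_le_rpow_of_exponent_le h.le h1
    have hIt : ‖Complex.I * (t:ℂ)‖ = |t| := by simp
    calc ‖Complex.exp (Complex.I * t) - 1 - Complex.I * t‖
        ≤ ‖Complex.exp (Complex.I * t) - 1‖ + ‖Complex.I * (t:ℂ)‖ := norm_sub_le _ _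
      _ ≤ 2 + |t| := by
          have hb : ‖Complex.exp (Complex.I * t) - 1‖ ≤ 2 := by
            calc ‖Complex.exp (Complex.I * t) - 1‖ ≤ ‖Complex.exp (Complex.I * t)‖ + ‖(1:ℂ)‖ :=
              norm_sub_le _ _
            _ ≤ 2 := by rw [hn]; norm_num
          linarith [hIt.le]
      _ ≤ 3 * |t| := by linarith
      _ ≤ 3 * |t| ^ α := by linarith

lemma amgm (x y θ α : ℝ) (hx : 0 ≤ x) (hy : 0 ≤ y) (hθ : 0 ≤ θ) (hθ1 : θ ≤ 1) (hα : 1 ≤ α) :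
    x * y ^ (α - 1) ≤ x ^ α + x ^ θ * y ^ (α - θ) := by
  have hxa : (0:ℝ) ≤ x ^ α := Real.rpow_nonneg hx _
  have hxt : (0:ℝ) ≤ x ^ θ * y ^ (α - θ) := mul_nonneg (Real.rpow_nonneg hx _) (Real.rpow_nonneg hy _)
  rcases eq_or_lt_of_le hx with rfl | hx0
  · simpa using add_nonneg hxa hxt
  rcases le_or_gt x y with hxy | hyx
  · have hy0 : 0 < y := lt_of_lt_of_le hx0 hxy
    have key : x * y ^ (α - 1) ≤ x ^ θ * y ^ (α - θ) := by
      have e1 : x = x ^ θ * x ^ (1 - θ) := by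
        rw [← Real.rpow_add hx0, show θ + (1 - θ) = 1 by ring, Real.rpow_one]
      have e2 : x ^ (1 - θ) ≤ y ^ (1 - θ) :=
        Real.rpow_le_rpow hx hxy (by linarith)
      have e3 : y ^ (1 - θ) * y ^ (α - 1) = y ^ (α - θ) := by
        rw [← Real.rpow_add hy0, show 1 - θ + (α - 1) = α - θ by ring]
      calc x * y ^ (α - 1) = x ^ θ * x ^ (1 - θ) * y ^ (α - 1) := by rw [← e1]
        _ ≤ x ^ θ * y ^ (1 - θ) * y ^ (α - 1) :=
            mul_le_mul_of_nonneg_right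
              (mul_le_mul_of_nonneg_left e2 (Real.rpow_nonneg hx θ))
              (Real.rpow_nonneg hy _)
        _ = x ^ θ * y ^ (α - θ) := by rw [mul_assoc, e3]
    linarith
  · have key : x * y ^ (α - 1) ≤ x ^ α := by
      have e2 : y ^ (α - 1) ≤ x ^ (α - 1) :=
        Real.rpow_le_rpow hy hyx.le (by linarith)
      have e3 : x * x ^ (α - 1) = x ^ α := by
        nth_rewrite 1 [← Real.rpow_one x]
        rw [← Real.rpow_add hx0, show 1 + (α - 1) = α by ring]
      calc x * y ^ (α - 1) ≤ x * x ^ (α - 1) :=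
            mul_le_mul_of_nonneg_left e2 hx
        _ = x ^ α := e3
    linarith

lemma rpow_norm_le (u : EuclideanSpace ℝ (Fin d)) (γ β : ℝ) (h0 : 0 ≤ γ) (hγβ : γ ≤ β) :
    ‖u‖ ^ γ ≤ 1 + ‖u‖ ^ β := by
  rcases le_or_gt ‖u‖ 1 with h | h
  · have : ‖u‖ ^ γ ≤ 1 := Real.rpow_le_one (norm_nonneg _) h h0
    have hb : (0:ℝ) ≤ ‖u‖ ^ β := Real.rpow_nonneg (norm_nonneg _) _
    linarith
  · have : ‖u‖ ^ γ ≤ ‖u‖ ^ β := Real.rpow_le_rpow_of_exponent_le h.le hγβ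
    linarith

set_option maxHeartbeats 2000000 in
/-- If `f : ℝ^d → ℝ` is integrable with `∫ |f(x)||x|^β dx < ∞` for some `β ∈ (1,2]`
and `∫ x f(x) dx = 0`, then for every `θ ∈ [0,1]` and `α ∈ [θ,β]` there is `c > 0` with
`|f̂(x₁-x₂) - f̂(-x₂)| ≤ c · min(|x₁|^α + |x₁|^θ |x₂|^{α-θ}, 1)` for all `x₁, x₂`. -/
theorem fourier_increment_bound_high (d : ℕ) (f : EuclideanSpace ℝ (Fin d) → ℝ)
    (β : ℝ) (hβ : β ∈ Set.Ioc (1:ℝ) 2)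
    (hf : Integrable f)
    (hfβ : Integrable (fun x => |f x| * ‖x‖ ^ β))
    (hmean : ∫ x, f x • x = (0 : EuclideanSpace ℝ (Fin d)))
    (θ : ℝ) (hθ : θ ∈ Set.Icc (0:ℝ) 1)
    (α : ℝ) (hα : α ∈ Set.Icc θ β) :
    ∃ c > (0:ℝ), ∀ x₁ x₂ : EuclideanSpace ℝ (Fin d),
      ‖(∫ u, (f u : ℂ) * Complex.exp (Complex.I * (⟪u, x₁ - x₂⟫ : ℝ))) -
          ∫ u, (f u : ℂ) * Complex.exp (Complex.I * (⟪u, -x₂⟫ : ℝ))‖ ≤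
        c * min (‖x₁‖ ^ α + ‖x₁‖ ^ θ * ‖x₂‖ ^ (α - θ)) 1 := by
  obtain ⟨hβ1, hβ2⟩ := hβ
  obtain ⟨hθ0, hθ1⟩ := hθ
  obtain ⟨hθα, hαβ⟩ := hα
  have hα0 : 0 ≤ α := hθ0.trans hθα
  have hα2 : α ≤ 2 := hαβ.trans hβ2
  have hbase : Integrable (fun u : EuclideanSpace ℝ (Fin d) => |f u| + |f u| * ‖u‖ ^ β) :=
    hf.abs.add hfβ
  have hint : ∀ γ : ℝ, 0 ≤ γ → γ ≤ β →
      Integrable (fun u : EuclideanSpace ℝ (Fin d) => |f u| * ‖u‖ ^ γ) := by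
    intro γ h0 h1
    refine hbase.mono' ?_ ?_
    · exact (hf.abs.aestronglyMeasurable).mul
        ((continuous_norm.rpow_const fun x => Or.inr h0).aestronglyMeasurable)
    · filter_upwards with u
      have h2 : ‖u‖ ^ γ ≤ 1 + ‖u‖ ^ β := rpow_norm_le u γ β h0 h1
      rw [Real.norm_eq_abs, abs_mul, abs_abs,
        abs_of_nonneg (Real.rpow_nonneg (norm_nonneg _) _)]
      nlinarith [abs_nonneg (f u), Real.rpow_nonneg (norm_nonneg u) β]
  set M : ℝ := ∫ u, (|f u| + |f u| * ‖u‖ ^ β) with hMdef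
  have hM0 : 0 ≤ M := integral_nonneg fun u => by positivity
  have hMom : ∀ γ : ℝ, 0 ≤ γ → γ ≤ β → (∫ u, |f u| * ‖u‖ ^ γ) ≤ M := by
    intro γ h0 h1
    refine integral_mono (hint γ h0 h1) hbase fun u => ?_
    have h2 : ‖u‖ ^ γ ≤ 1 + ‖u‖ ^ β := rpow_norm_le u γ β h0 h1
    nlinarith [abs_nonneg (f u), Real.rpow_nonneg (norm_nonneg u) β]
  have hfM : (∫ u, |f u|) ≤ M := by
    refine integral_mono hf.abs hbase fun u => ?_
    simp only
    nlinarith [abs_nonneg (f u), Real.rpow_nonneg (norm_nonneg u) β]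
  have hnormexp : ∀ r : ℝ, ‖Complex.exp (Complex.I * (r:ℂ))‖ = 1 := fun r => by
    simp [Complex.norm_exp]
  have hexp : ∀ ξ : EuclideanSpace ℝ (Fin d),
      Integrable (fun u => (f u : ℂ) * Complex.exp (Complex.I * (⟪u, ξ⟫ : ℝ))) := by
    intro ξ
    have hc : Continuous fun u : EuclideanSpace ℝ (Fin d) =>
        Complex.exp (Complex.I * (⟪u, ξ⟫ : ℝ)) :=
      Complex.continuous_exp.comp (continuous_const.mul
        (Complex.continuous_ofReal.comp (continuous_id.inner continuous_const)))
    refine hf.norm.mono' ?_ ?_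
    · exact (Complex.continuous_ofReal.comp_aestronglyMeasurable hf.aestronglyMeasurable).mul
        hc.aestronglyMeasurable
    · filter_upwards with u
      rw [norm_mul, hnormexp, mul_one, Complex.norm_real]
  refine ⟨6 * M + 1, by positivity, ?_⟩
  intro x₁ x₂
  set A : ℝ := ‖x₁‖ ^ α + ‖x₁‖ ^ θ * ‖x₂‖ ^ (α - θ) with hAdef
  have hA0 : 0 ≤ A := by positivity
  have hx1A : ‖x₁‖ ^ α ≤ A := le_add_of_nonneg_right (by positivity)
  have htriv : ‖(∫ u, (f u : ℂ) * Complex.exp (Complex.I * (⟪u, x₁ - x₂⟫ : ℝ))) -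
      ∫ u, (f u : ℂ) * Complex.exp (Complex.I * (⟪u, -x₂⟫ : ℝ))‖ ≤ 2 * M := by
    rw [← integral_sub (hexp _) (hexp _)]
    refine (norm_integral_le_of_norm_le (hf.abs.const_mul 2) ?_).trans ?_
    · filter_upwards with u
      calc ‖(f u : ℂ) * Complex.exp (Complex.I * (⟪u, x₁ - x₂⟫ : ℝ)) -
            (f u : ℂ) * Complex.exp (Complex.I * (⟪u, -x₂⟫ : ℝ))‖
          ≤ ‖(f u : ℂ) * Complex.exp (Complex.I * (⟪u, x₁ - x₂⟫ : ℝ))‖ +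
            ‖(f u : ℂ) * Complex.exp (Complex.I * (⟪u, -x₂⟫ : ℝ))‖ := norm_sub_le _ _
        _ ≤ 2 * |f u| := by
            simp only [norm_mul, hnormexp, mul_one, Complex.norm_real, Real.norm_eq_abs]
            linarith
    · rw [integral_const_mul]
      linarith
  have hmain : ‖(∫ u, (f u : ℂ) * Complex.exp (Complex.I * (⟪u, x₁ - x₂⟫ : ℝ))) -
      ∫ u, (f u : ℂ) * Complex.exp (Complex.I * (⟪u, -x₂⟫ : ℝ))‖ ≤ 6 * M * A := by
    have hIα := hMom α hα0 hαβ
    have hIα0 : (0:ℝ) ≤ ∫ u, |f u| * ‖u‖ ^ α := integral_nonneg fun u => by positivity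
    rcases le_or_gt α 1 with hα1 | hα1
    · -- easy case, no mean-zero needed
      rw [← integral_sub (hexp _) (hexp _)]
      refine (norm_integral_le_of_norm_le ((hint α hα0 hαβ).const_mul (2 * ‖x₁‖ ^ α)) ?_).trans ?_
      · filter_upwards with u
        have ha : (⟪u, x₁ - x₂⟫ : ℝ) = ⟪u, x₁⟫ - ⟪u, x₂⟫ := inner_sub_right _ _ _
        have hb : (⟪u, -x₂⟫ : ℝ) = -⟪u, x₂⟫ := inner_neg_right _ _
        set p : ℝ := ⟪u, x₁⟫
        set q : ℝ := ⟪u, x₂⟫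
        have hfactor : Complex.exp (Complex.I * ((p - q : ℝ) : ℂ)) -
            Complex.exp (Complex.I * ((-q : ℝ) : ℂ)) =
            Complex.exp (Complex.I * ((-q : ℝ) : ℂ)) * (Complex.exp (Complex.I * (p : ℂ)) - 1) := by
          rw [mul_sub, mul_one, ← Complex.exp_add]
          congr 2
          push_cast
          ring
        have hB : ‖Complex.exp (Complex.I * (p : ℂ)) - 1‖ ≤ 2 * |p| ^ α := expB p α hα0 hα1
        have hpα : |p| ^ α ≤ ‖u‖ ^ α * ‖x₁‖ ^ α := by
          have h1 : |p| ^ α ≤ (‖u‖ * ‖x₁‖) ^ α :=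
            Real.rpow_le_rpow (abs_nonneg _) (abs_real_inner_le_norm u x₁) hα0
          rwa [Real.mul_rpow (norm_nonneg _) (norm_nonneg _)] at h1
        calc ‖(f u : ℂ) * Complex.exp (Complex.I * ((⟪u, x₁ - x₂⟫ : ℝ) : ℂ)) -
              (f u : ℂ) * Complex.exp (Complex.I * ((⟪u, -x₂⟫ : ℝ) : ℂ))‖
            = |f u| * ‖Complex.exp (Complex.I * (p : ℂ)) - 1‖ := by
              rw [ha, hb, ← mul_sub, norm_mul, Complex.norm_real, Real.norm_eq_abs, hfactor,
                norm_mul, hnormexp, one_mul]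
          _ ≤ |f u| * (2 * |p| ^ α) := mul_le_mul_of_nonneg_left hB (abs_nonneg _)
          _ ≤ |f u| * (2 * (‖u‖ ^ α * ‖x₁‖ ^ α)) := by
              have := abs_nonneg (f u); nlinarith
          _ = 2 * ‖x₁‖ ^ α * (|f u| * ‖u‖ ^ α) := by ring
      · rw [integral_const_mul]
        nlinarith [mul_nonneg (Real.rpow_nonneg (norm_nonneg x₁) α) (sub_nonneg.mpr hIα),
          mul_nonneg hM0 (sub_nonneg.mpr hx1A)]
    · -- hard case: 1 < α, use mean-zero
      have hvec : Integrable (fun u => f u • u) := by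
        refine hbase.mono' (hf.aestronglyMeasurable.smul aestronglyMeasurable_id) ?_
        filter_upwards with u
        rw [norm_smul, Real.norm_eq_abs]
        have h1 : ‖u‖ ≤ 1 + ‖u‖ ^ β := by
          simpa [Real.rpow_one] using rpow_norm_le u 1 β zero_le_one hβ1.le
        nlinarith [abs_nonneg (f u), Real.rpow_nonneg (norm_nonneg u) β]
      have hinner0 : (∫ u, f u * ⟪u, x₁⟫) = 0 := by
        have he : ∀ u : EuclideanSpace ℝ (Fin d), f u * ⟪u, x₁⟫ = ⟪x₁, f u • u⟫ := by
          intro u; rw [real_inner_smul_right, real_inner_comm]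
        calc (∫ u, f u * ⟪u, x₁⟫) = ∫ u, ⟪x₁, f u • u⟫ := by simp_rw [he]
          _ = ⟪x₁, ∫ u, f u • u⟫ := integral_inner hvec x₁
          _ = 0 := by rw [hmean, inner_zero_right]
      have hr_int : Integrable (fun u => f u * ⟪u, x₁⟫) := by
        refine (hbase.const_mul ‖x₁‖).mono' ?_ ?_
        · exact hf.aestronglyMeasurable.mul
            ((continuous_id.inner continuous_const)).aestronglyMeasurable
        · filter_upwards with u
          rw [Real.norm_eq_abs, abs_mul]
          have h1 : |(⟪u, x₁⟫ : ℝ)| ≤ ‖u‖ * ‖x₁‖ := abs_real_inner_le_norm u x₁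
          have h2 : ‖u‖ ≤ 1 + ‖u‖ ^ β := by
            simpa [Real.rpow_one] using rpow_norm_le u 1 β zero_le_one hβ1.le
          have h3 := mul_le_mul_of_nonneg_left h1 (abs_nonneg (f u))
          have h4 := mul_le_mul_of_nonneg_left
            (mul_le_mul_of_nonneg_right h2 (norm_nonneg x₁)) (abs_nonneg (f u))
          nlinarith [abs_nonneg (f u)]
      have hc_int : Integrable (fun u => ((f u * ⟪u, x₁⟫ : ℝ) : ℂ) * Complex.I) :=
        hr_int.ofReal.mul_const _
      have hc0 : (∫ u, ((f u * ⟪u, x₁⟫ : ℝ) : ℂ) * Complex.I) = 0 := by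
        rw [integral_mul_const]
        have he : (∫ a, ((f a * ⟪a, x₁⟫ : ℝ) : ℂ)) =
            ((∫ u, f u * ⟪u, x₁⟫ : ℝ) : ℂ) := integral_ofReal
        rw [he, hinner0]
        simp
      have hsplit : (∫ u, (f u : ℂ) * Complex.exp (Complex.I * (⟪u, x₁ - x₂⟫ : ℝ))) -
          (∫ u, (f u : ℂ) * Complex.exp (Complex.I * (⟪u, -x₂⟫ : ℝ))) =
          ∫ u, ((f u : ℂ) * Complex.exp (Complex.I * (⟪u, x₁ - x₂⟫ : ℝ)) -
            (f u : ℂ) * Complex.exp (Complex.I * (⟪u, -x₂⟫ : ℝ)) -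
            ((f u * ⟪u, x₁⟫ : ℝ) : ℂ) * Complex.I) := by
        have hsub : Integrable (fun u => (f u : ℂ) * Complex.exp (Complex.I * (⟪u, x₁ - x₂⟫ : ℝ)) -
            (f u : ℂ) * Complex.exp (Complex.I * (⟪u, -x₂⟫ : ℝ))) := (hexp _).sub (hexp _)
        rw [integral_sub hsub hc_int, integral_sub (hexp _) (hexp _), hc0, sub_zero]
      rw [hsplit]
      refine (norm_integral_le_of_norm_le ((hint α hα0 hαβ).const_mul (6 * A)) ?_).trans ?_
      · filter_upwards with u
        have ha : (⟪u, x₁ - x₂⟫ : ℝ) = ⟪u, x₁⟫ - ⟪u, x₂⟫ := inner_sub_right _ _ _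
        have hb : (⟪u, -x₂⟫ : ℝ) = -⟪u, x₂⟫ := inner_neg_right _ _
        set p : ℝ := ⟪u, x₁⟫
        set q : ℝ := ⟪u, x₂⟫
        have hid : (f u : ℂ) * Complex.exp (Complex.I * ((p - q : ℝ) : ℂ)) -
            (f u : ℂ) * Complex.exp (Complex.I * ((-q : ℝ) : ℂ)) -
            ((f u * p : ℝ) : ℂ) * Complex.I =
            (f u : ℂ) * (Complex.exp (Complex.I * ((-q : ℝ) : ℂ)) *
                (Complex.exp (Complex.I * (p : ℂ)) - 1 - Complex.I * p) +
              Complex.I * p * (Complex.exp (Complex.I * ((-q : ℝ) : ℂ)) - 1)) := by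
          have he : Complex.exp (Complex.I * ((p - q : ℝ) : ℂ)) =
              Complex.exp (Complex.I * ((-q : ℝ) : ℂ)) * Complex.exp (Complex.I * (p : ℂ)) := by
            rw [← Complex.exp_add]
            congr 1
            push_cast
            ring
          rw [he]
          push_cast
          ring
        have h1 : ‖Complex.exp (Complex.I * (p : ℂ)) - 1 - Complex.I * p‖ ≤ 3 * |p| ^ α :=
          expA p α hα1.le hα2
        have h2 : ‖Complex.exp (Complex.I * ((-q : ℝ) : ℂ)) - 1‖ ≤ 2 * |q| ^ (α - 1) := by
          have := expB (-q) (α - 1) (by linarith) (by linarith)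
          simpa [abs_neg] using this
        have hp1 : |p| ≤ ‖u‖ * ‖x₁‖ := abs_real_inner_le_norm u x₁
        have hpα : |p| ^ α ≤ ‖u‖ ^ α * ‖x₁‖ ^ α := by
          have h3 : |p| ^ α ≤ (‖u‖ * ‖x₁‖) ^ α :=
            Real.rpow_le_rpow (abs_nonneg _) hp1 hα0
          rwa [Real.mul_rpow (norm_nonneg _) (norm_nonneg _)] at h3
        have hqα : |q| ^ (α - 1) ≤ ‖u‖ ^ (α - 1) * ‖x₂‖ ^ (α - 1) := by
          have h3 : |q| ^ (α - 1) ≤ (‖u‖ * ‖x₂‖) ^ (α - 1) :=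
            Real.rpow_le_rpow (abs_nonneg _) (abs_real_inner_le_norm u x₂) (by linarith)
          rwa [Real.mul_rpow (norm_nonneg _) (norm_nonneg _)] at h3
        have huu : ‖u‖ * ‖u‖ ^ (α - 1) = ‖u‖ ^ α := by
          rw [show α = 1 + (α - 1) by ring, Real.rpow_add' (norm_nonneg u) (by linarith),
            Real.rpow_one]
          ring_nf
        have hAm : ‖x₁‖ * ‖x₂‖ ^ (α - 1) ≤ A :=
          amgm ‖x₁‖ ‖x₂‖ θ α (norm_nonneg _) (norm_nonneg _) hθ0 hθ1 hα1.le
        have hS : ‖Complex.exp (Complex.I * ((-q : ℝ) : ℂ)) *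
              (Complex.exp (Complex.I * (p : ℂ)) - 1 - Complex.I * p) +
            Complex.I * p * (Complex.exp (Complex.I * ((-q : ℝ) : ℂ)) - 1)‖ ≤
            6 * A * ‖u‖ ^ α := by
          have hIp : ‖Complex.I * (p : ℂ)‖ = |p| := by simp
          have c2 : |p| * |q| ^ (α - 1) ≤ ‖u‖ ^ α * (‖x₁‖ * ‖x₂‖ ^ (α - 1)) := by
            calc |p| * |q| ^ (α - 1) ≤ (‖u‖ * ‖x₁‖) * (‖u‖ ^ (α - 1) * ‖x₂‖ ^ (α - 1)) :=
                  mul_le_mul hp1 hqα (Real.rpow_nonneg (abs_nonneg _) _) (by positivity)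
              _ = (‖u‖ * ‖u‖ ^ (α - 1)) * (‖x₁‖ * ‖x₂‖ ^ (α - 1)) := by ring
              _ = ‖u‖ ^ α * (‖x₁‖ * ‖x₂‖ ^ (α - 1)) := by rw [huu]
          have hu0 : (0:ℝ) ≤ ‖u‖ ^ α := Real.rpow_nonneg (norm_nonneg _) _
          calc ‖Complex.exp (Complex.I * ((-q : ℝ) : ℂ)) *
                (Complex.exp (Complex.I * (p : ℂ)) - 1 - Complex.I * p) +
              Complex.I * p * (Complex.exp (Complex.I * ((-q : ℝ) : ℂ)) - 1)‖
              ≤ ‖Complex.exp (Complex.I * ((-q : ℝ) : ℂ)) *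
                  (Complex.exp (Complex.I * (p : ℂ)) - 1 - Complex.I * p)‖ +
                ‖Complex.I * (p : ℂ) * (Complex.exp (Complex.I * ((-q : ℝ) : ℂ)) - 1)‖ :=
                norm_add_le _ _
            _ ≤ 3 * |p| ^ α + |p| * (2 * |q| ^ (α - 1)) := by
                rw [norm_mul, norm_mul, hnormexp, one_mul, hIp]
                have := mul_le_mul_of_nonneg_left h2 (abs_nonneg p)
                linarith
            _ ≤ 3 * (‖u‖ ^ α * ‖x₁‖ ^ α) + 2 * (‖u‖ ^ α * (‖x₁‖ * ‖x₂‖ ^ (α - 1))) := by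
                nlinarith [abs_nonneg p]
            _ ≤ 3 * (‖u‖ ^ α * A) + 2 * (‖u‖ ^ α * A) := by
                nlinarith [mul_nonneg hu0 (sub_nonneg.mpr hx1A),
                  mul_nonneg hu0 (sub_nonneg.mpr hAm)]
            _ ≤ 6 * A * ‖u‖ ^ α := by nlinarith [mul_nonneg hA0 hu0]
        calc ‖(f u : ℂ) * Complex.exp (Complex.I * ((⟪u, x₁ - x₂⟫ : ℝ) : ℂ)) -
              (f u : ℂ) * Complex.exp (Complex.I * ((⟪u, -x₂⟫ : ℝ) : ℂ)) -
              ((f u * (⟪u, x₁⟫ : ℝ) : ℝ) : ℂ) * Complex.I‖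
            = |f u| * ‖Complex.exp (Complex.I * ((-q : ℝ) : ℂ)) *
                (Complex.exp (Complex.I * (p : ℂ)) - 1 - Complex.I * p) +
              Complex.I * p * (Complex.exp (Complex.I * ((-q : ℝ) : ℂ)) - 1)‖ := by
              rw [ha, hb, hid, norm_mul, Complex.norm_real, Real.norm_eq_abs]
          _ ≤ |f u| * (6 * A * ‖u‖ ^ α) := mul_le_mul_of_nonneg_left hS (abs_nonneg _)
          _ = 6 * A * (|f u| * ‖u‖ ^ α) := by ring
      · rw [integral_const_mul]
        nlinarith [mul_nonneg hA0 (sub_nonneg.mpr hIα)]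
  rcases le_or_gt A 1 with h | h
  · rw [min_eq_left h]
    calc ‖(∫ u, (f u : ℂ) * Complex.exp (Complex.I * (⟪u, x₁ - x₂⟫ : ℝ))) -
        ∫ u, (f u : ℂ) * Complex.exp (Complex.I * (⟪u, -x₂⟫ : ℝ))‖ ≤ 6 * M * A := hmain
      _ ≤ (6 * M + 1) * A := by nlinarith
  · rw [min_eq_right h.le]
    calc ‖(∫ u, (f u : ℂ) * Complex.exp (Complex.I * (⟪u, x₁ - x₂⟫ : ℝ))) -
        ∫ u, (f u : ℂ) * Complex.exp (Complex.I * (⟪u, -x₂⟫ : ℝ))‖ ≤ 2 * M := htriv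
      _ ≤ (6 * M + 1) * 1 := by nlinarith
end

section
/- For H₀ ∈ (0,1) and K₀ ∈ (0,1], define r(t) = (e^{H₀K₀ t}/2^{K₀}) [(1 + e^{-2H₀ t})^{K₀} − (1 − e^{-t})^{2H₀K₀}] for t ≥ 0. Then r(t) > 0 for all t ≥ 0 and r is strictly decreasing on (0,∞). -/
open Real Set

private lemma bifBm_key_ineq (H K v : ℝ) (hH0 : 0 < H) (hH1 : H < 1)
    (hK0 : 0 < K) (hK1 : K ≤ 1) (hv0 : 0 < v) (hv1 : v < 1) :
    (1 - v ^ (2*H)) * (1 + v ^ (2*H)) ^ (K - 1) < (1 + v) * (1 - v) ^ (2*H*K - 1) := by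
  have hu0 : 0 < v ^ (2*H) := Real.rpow_pos_of_pos hv0 _
  have hu1 : v ^ (2*H) < 1 := Real.rpow_lt_one hv0.le hv1 (by linarith)
  have h1 : (1 + v ^ (2*H)) ^ (K - 1) ≤ 1 :=
    Real.rpow_le_one_of_one_le_of_nonpos (by linarith) (by linarith)
  have h1' : (0:ℝ) < (1 + v ^ (2*H)) ^ (K - 1) := Real.rpow_pos_of_pos (by linarith) _
  have h2 : (1 - v ^ (2*H)) * (1 + v ^ (2*H)) ^ (K - 1) ≤ 1 - v ^ (2*H) := by
    nlinarith
  have h3 : v ^ (2:ℝ) < v ^ (2*H) := Real.rpow_lt_rpow_of_exponent_gt hv0 hv1 (by nlinarith)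
  have h4 : v ^ (2:ℝ) = v * v := by
    rw [show (2:ℝ) = ((2:ℕ):ℝ) by norm_num, Real.rpow_natCast]; ring
  have hHK : H * K < 1 := by nlinarith
  have h5 : (1 - v) ≤ (1 - v) ^ (2*H*K - 1) := by
    calc (1-v) = (1-v) ^ (1:ℝ) := (Real.rpow_one _).symm
    _ ≤ (1-v) ^ (2*H*K-1) :=
        Real.rpow_le_rpow_of_exponent_ge (by linarith) (by linarith) (by nlinarith)
  calc (1 - v ^ (2*H)) * (1 + v ^ (2*H)) ^ (K - 1) ≤ 1 - v ^ (2*H) := h2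
    _ < 1 - v ^ (2:ℝ) := by linarith
    _ = (1+v)*(1-v) := by rw [h4]; ring
    _ ≤ (1 + v) * (1 - v) ^ (2*H*K - 1) := by nlinarith

/-- For `H₀ ∈ (0,1)`, `K₀ ∈ (0,1]`, the function
`r(t) = (e^{H₀K₀t}/2^{K₀}) [(1+e^{-2H₀t})^{K₀} - (1-e^{-t})^{2H₀K₀}]` is
positive on `[0,∞)` and strictly decreasing on `(0,∞)`. -/
theorem bifBm_covariance_pos_strictAnti (H₀ K₀ : ℝ)
    (hH₀ : H₀ ∈ Set.Ioo (0:ℝ) 1) (hK₀ : K₀ ∈ Set.Ioc (0:ℝ) 1)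
    (r : ℝ → ℝ)
    (hr : ∀ t, r t = Real.exp (H₀ * K₀ * t) / 2 ^ K₀ *
      ((1 + Real.exp (-(2 * H₀ * t))) ^ K₀ - (1 - Real.exp (-t)) ^ (2 * H₀ * K₀))) :
    (∀ t, 0 ≤ t → 0 < r t) ∧ StrictAntiOn r (Set.Ioi 0) := by
  obtain ⟨hH0, hH1⟩ := hH₀
  obtain ⟨hK0, hK1⟩ := hK₀
  have hc : (0:ℝ) < 2 ^ K₀ := Real.rpow_pos_of_pos two_pos K₀
  constructor
  · intro t ht
    rw [hr]
    have hv1 : Real.exp (-t) ≤ 1 := Real.exp_le_one_iff.mpr (by linarith)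
    have hv0 := Real.exp_pos (-t)
    have hB : (1 - Real.exp (-t)) ^ (2*H₀*K₀) ≤ 1 :=
      Real.rpow_le_one (by linarith) (by linarith) (by positivity)
    have hA : 1 < (1 + Real.exp (-(2*H₀*t))) ^ K₀ := by
      rw [Real.one_lt_rpow_iff_of_pos (by positivity)]
      exact Or.inl ⟨by linarith [Real.exp_pos (-(2*H₀*t))], hK0⟩
    have := Real.exp_pos (H₀*K₀*t)
    have h : (0:ℝ) < (1 + Real.exp (-(2 * H₀ * t))) ^ K₀ - (1 - Real.exp (-t)) ^ (2 * H₀ * K₀) := by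
      linarith
    positivity
  · have hfun : r = fun t => Real.exp (H₀ * K₀ * t) / 2 ^ K₀ *
      ((1 + Real.exp (-(2 * H₀ * t))) ^ K₀ - (1 - Real.exp (-t)) ^ (2 * H₀ * K₀)) := funext hr
    rw [hfun]
    apply strictAntiOn_of_deriv_neg (convex_Ioi 0)
    · apply Continuous.continuousOn
      have c1 : Continuous fun t : ℝ => Real.exp (H₀*K₀*t) / 2 ^ K₀ := by fun_prop
      have c2 : Continuous fun t : ℝ => (1 + Real.exp (-(2*H₀*t))) ^ K₀ := by
        apply Continuous.rpow_const (by fun_prop)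
        intro x; exact Or.inl (by positivity)
      have c3 : Continuous fun t : ℝ => (1 - Real.exp (-t)) ^ (2*H₀*K₀) := by
        apply Continuous.rpow_const (by fun_prop)
        intro x; exact Or.inr (by positivity)
      exact c1.mul (c2.sub c3)
    · intro t ht
      rw [interior_Ioi, mem_Ioi] at ht
      set v := Real.exp (-t) with hv
      have hv0 : 0 < v := Real.exp_pos _
      have hv1 : v < 1 := Real.exp_lt_one_iff.mpr (by linarith)
      have huv : Real.exp (-(2*H₀*t)) = v ^ (2*H₀) := by
        rw [hv, ← Real.exp_mul]
        congr 1; ring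
      -- derivatives
      have hE : HasDerivAt (fun t => Real.exp (H₀*K₀*t)) (Real.exp (H₀*K₀*t) * (H₀*K₀)) t := by
        have h : HasDerivAt (fun t : ℝ => H₀*K₀*t) (H₀*K₀) t := by
          simpa using (hasDerivAt_id t).const_mul (H₀*K₀)
        exact h.exp
      have hA : HasDerivAt (fun t => (1 + Real.exp (-(2*H₀*t))) ^ K₀)
          ((Real.exp (-(2*H₀*t)) * -(2*H₀)) * K₀ * (1 + Real.exp (-(2*H₀*t))) ^ (K₀ - 1)) t := by
        have h1 : HasDerivAt (fun t : ℝ => -(2*H₀*t)) (-(2*H₀)) t := by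
          simpa using ((hasDerivAt_id t).const_mul (2*H₀)).fun_neg
        exact (h1.exp.const_add 1).rpow_const (Or.inl (by positivity))
      have hB : HasDerivAt (fun t => (1 - Real.exp (-t)) ^ (2*H₀*K₀))
          ((-(Real.exp (-t) * (-1))) * (2*H₀*K₀) * (1 - Real.exp (-t)) ^ (2*H₀*K₀ - 1)) t := by
        have h1 : HasDerivAt (fun t : ℝ => -t) (-1 : ℝ) t := (hasDerivAt_id t).neg
        refine (HasDerivAt.const_sub 1 h1.exp).rpow_const (Or.inl ?_)
        have h2 : Real.exp (-t) < 1 := Real.exp_lt_one_iff.mpr (by linarith)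
        exact ne_of_gt (by linarith)
      have hd := (hE.div_const ((2:ℝ) ^ K₀)).fun_mul (hA.fun_sub hB)
      rw [hd.deriv]
      -- show the derivative value is negative
      have hPQ := bifBm_key_ineq H₀ K₀ v hH0 hH1 hK0 hK1 hv0 hv1
      set P := (1 + v ^ (2*H₀)) ^ (K₀ - 1) with hP
      set Q := (1 - v) ^ (2*H₀*K₀ - 1) with hQ
      have hAeq : (1 + v ^ (2*H₀)) ^ K₀ = P * (1 + v ^ (2*H₀)) := by
        rw [hP, show K₀ = K₀ - 1 + 1 by ring, Real.rpow_add_one (by positivity)]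
        norm_num
      have hBeq : (1 - v) ^ (2*H₀*K₀) = Q * (1 - v) := by
        rw [hQ, show 2*H₀*K₀ = 2*H₀*K₀ - 1 + 1 by ring,
          Real.rpow_add_one (ne_of_gt (by linarith : (0:ℝ) < 1 - v))]
        norm_num
      rw [huv, hAeq, hBeq]
      have key : (1 - v ^ (2*H₀)) * P - (1 + v) * Q < 0 := by linarith
      have hpos : 0 < Real.exp (H₀*K₀*t) / 2 ^ K₀ * (H₀*K₀) := by positivity
      have : Real.exp (H₀ * K₀ * t) * (H₀ * K₀) / 2 ^ K₀ * (P * (1 + v ^ (2*H₀)) - Q * (1 - v)) +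
          Real.exp (H₀ * K₀ * t) / 2 ^ K₀ *
            (v ^ (2*H₀) * -(2*H₀) * K₀ * P - -(v * -1) * (2*H₀*K₀) * Q) =
          Real.exp (H₀*K₀*t) / 2 ^ K₀ * (H₀*K₀) * ((1 - v ^ (2*H₀)) * P - (1 + v) * Q) := by
        ring
      rw [this]
      exact mul_neg_of_pos_of_neg hpos key
end

section
/- For H ∈ (0,1), define r(t) = e^{Ht} [e^{-2Ht} + 1 − (1/2)((1+e^{-t})^{2H} + (1−e^{-t})^{2H})] for t ≥ 0. Then r(t) > 0 for all t ≥ 0 and r is strictly decreasing on (0,∞). -/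
open Real Set

/-- For `0 < u < 1` and exponent `p < 1`, `u < u ^ p`. -/
lemma subfBm_aux_self_lt_rpow {u p : ℝ} (hu0 : 0 < u) (hu1 : u < 1) (hp : p < 1) :
    u < u ^ p := by
  nth_rewrite 1 [← Real.rpow_one u]
  exact Real.rpow_lt_rpow_of_exponent_gt hu0 hu1 hp

lemma subfBm_aux_one_lt_rpow_add {u p : ℝ} (hu0 : 0 < u) (hu1 : u < 1) (hp : p < 1) :
    1 < u ^ p + (1 - u) ^ p := by
  have h1 := subfBm_aux_self_lt_rpow hu0 hu1 hp
  have h2 := subfBm_aux_self_lt_rpow (by linarith : (0:ℝ) < 1 - u) (by linarith) hp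
  linarith

/-- Subadditivity of `rpow` with exponent in `[0,1]` for positive bases. -/
lemma subfBm_aux_rpow_add_le {a b p : ℝ} (ha : 0 < a) (hb : 0 < b) (hp0 : 0 ≤ p)
    (hp1 : p ≤ 1) : (a + b) ^ p ≤ a ^ p + b ^ p := by
  have hab : 0 < a + b := by linarith
  have e : ∀ c : ℝ, 0 < c → c ^ p = c ^ (p - 1) * c := by
    intro c hc
    have h : p - 1 + 1 = p := by ring
    rw [← Real.rpow_add_one hc.ne' (p - 1), h]
  have h1 : (a + b) ^ (p - 1) ≤ a ^ (p - 1) :=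
    Real.rpow_le_rpow_of_nonpos ha (by linarith) (by linarith)
  have h2 : (a + b) ^ (p - 1) ≤ b ^ (p - 1) :=
    Real.rpow_le_rpow_of_nonpos hb (by linarith) (by linarith)
  rw [e _ hab, e _ ha, e _ hb]
  nlinarith [mul_le_mul_of_nonneg_left h1 ha.le, mul_le_mul_of_nonneg_left h2 hb.le]

/-- The core inequality giving negativity of the derivative. -/
lemma subfBm_aux_core {H x : ℝ} (hH0 : 0 < H) (hH1 : H < 1) (hx0 : 0 < x) (hx1 : x < 1) :
    2 - 2 * x ^ (2 * H) <
      (1 + x) ^ (2 * H - 1) * (1 - x) + (1 - x) ^ (2 * H - 1) * (1 + x) := by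
  have h1x : (0:ℝ) < 1 + x := by linarith
  have h1x' : (0:ℝ) < 1 - x := by linarith
  have hsq : (0:ℝ) < 1 - x ^ 2 := by nlinarith
  set X := (1 + x) ^ (2 * H - 1) * (1 - x) with hXdef
  set Y := (1 - x) ^ (2 * H - 1) * (1 + x) with hYdef
  have hX : 0 < X := mul_pos (Real.rpow_pos_of_pos h1x _) h1x'
  have hY : 0 < Y := mul_pos (Real.rpow_pos_of_pos h1x' _) h1x
  have hXY : X * Y = ((1 - x ^ 2) ^ H) ^ 2 := by
    have h0 : X * Y = ((1 + x) * (1 - x)) ^ (2 * H - 1) * ((1 + x) * (1 - x)) := by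
      rw [hXdef, hYdef, Real.mul_rpow h1x.le h1x'.le]; ring
    have h2 : (1 + x) * (1 - x) = 1 - x ^ 2 := by ring
    have h3 : (1 - x ^ 2) ^ (2 * H - 1) * (1 - x ^ 2) = (1 - x ^ 2) ^ (2 * H) := by
      have h : 2 * H - 1 + 1 = 2 * H := by ring
      rw [← Real.rpow_add_one hsq.ne' (2 * H - 1), h]
    have h4 : (1 - x ^ 2) ^ (2 * H) = ((1 - x ^ 2) ^ H) ^ 2 := by
      rw [show 2 * H = H * 2 by ring, Real.rpow_mul hsq.le, Real.rpow_two]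
    rw [h0, h2, h3, h4]
  have hamgm : 2 * (1 - x ^ 2) ^ H ≤ X + Y := by
    have hs : Real.sqrt X * Real.sqrt Y = (1 - x ^ 2) ^ H := by
      rw [← Real.sqrt_mul hX.le, hXY, Real.sqrt_sq (Real.rpow_nonneg hsq.le H)]
    nlinarith [sq_nonneg (Real.sqrt X - Real.sqrt Y), Real.sq_sqrt hX.le,
      Real.sq_sqrt hY.le]
  have hkey : 1 - x ^ (2 * H) < (1 - x ^ 2) ^ H := by
    have h1 : x ^ (2 * H) = (x ^ 2) ^ H := by
      rw [show 2 * H = H * 2 by ring, Real.rpow_mul hx0.le, Real.rpow_two]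
      rw [show ((x ^ H) ^ 2 : ℝ) = (x ^ H) ^ (2:ℝ) by rw [Real.rpow_two]]
      rw [← Real.rpow_natCast x 2]
      rw [← Real.rpow_mul hx0.le, ← Real.rpow_mul hx0.le]
      norm_num [mul_comm]
    have h2 := subfBm_aux_one_lt_rpow_add (u := x ^ 2) (p := H)
      (by positivity) (by nlinarith) hH1
    rw [h1]; linarith
  linarith

/-- Key inequality for positivity: `(1+y)^γ < 2 y^γ + (1-y)^γ` for `γ ∈ (-1,1)`. -/
lemma subfBm_aux_key2 {γ y : ℝ} (hγ1 : γ < 1) (hy0 : 0 < y) (hy1 : y < 1) :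
    (1 + y) ^ γ < 2 * y ^ γ + (1 - y) ^ γ := by
  rcases le_or_gt γ 0 with h | h
  · have h1 : (1 + y) ^ γ ≤ 1 :=
      Real.rpow_le_one_of_one_le_of_nonpos (by linarith) h
    have h2 : 1 ≤ y ^ γ :=
      Real.one_le_rpow_of_pos_of_le_one_of_nonpos hy0 hy1.le h
    have h3 : 0 < y ^ γ := Real.rpow_pos_of_pos hy0 γ
    have h4 : 0 < (1 - y) ^ γ := Real.rpow_pos_of_pos (by linarith) γ
    linarith
  · have h1 : (1 + y) ^ γ ≤ 1 + y ^ γ := by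
      have := subfBm_aux_rpow_add_le (a := 1) (b := y) one_pos hy0 h.le hγ1.le
      simpa [Real.one_rpow] using this
    have h2 : 1 < y ^ γ + (1 - y) ^ γ := subfBm_aux_one_lt_rpow_add hy0 hy1 hγ1
    linarith

/-- Positivity: for `x ∈ (0,1]`, `(1+x)^{2H} + (1-x)^{2H} < 2 + 2 x^{2H}`. -/
lemma subfBm_aux_Fpos {H x : ℝ} (hH0 : 0 < H) (hH1 : H < 1) (hx0 : 0 < x) (hx1 : x ≤ 1) :
    (1 + x) ^ (2 * H) + (1 - x) ^ (2 * H) < 2 + 2 * x ^ (2 * H) := by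
  set F : ℝ → ℝ := fun y => 2 + 2 * y ^ (2 * H) - (1 + y) ^ (2 * H) - (1 - y) ^ (2 * H)
    with hFdef
  have hrpow_cont : Continuous (fun y : ℝ => y ^ (2 * H)) := by
    apply continuous_iff_continuousAt.2
    intro y
    exact Real.continuousAt_rpow_const y (2 * H) (Or.inr (by positivity))
  have hcont : ContinuousOn F (Icc 0 1) := by
    apply Continuous.continuousOn
    exact ((continuous_const.add (continuous_const.mul hrpow_cont)).sub
      (hrpow_cont.comp (continuous_const.add continuous_id))).sub
      (hrpow_cont.comp (continuous_const.sub continuous_id))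
  have hmono : StrictMonoOn F (Icc 0 1) := by
    apply strictMonoOn_of_deriv_pos (convex_Icc 0 1) hcont
    intro y hy
    rw [interior_Icc] at hy
    obtain ⟨hy0, hy1⟩ := hy
    have h1y : (0:ℝ) < 1 + y := by linarith
    have h1y' : (0:ℝ) < 1 - y := by linarith
    have hd1 : HasDerivAt (fun y : ℝ => y ^ (2 * H)) (2 * H * y ^ (2 * H - 1)) y :=
      Real.hasDerivAt_rpow_const (Or.inl hy0.ne')
    have hd2 : HasDerivAt (fun y : ℝ => (1 + y) ^ (2 * H))
        (1 * (2 * H) * (1 + y) ^ (2 * H - 1)) y :=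
      ((hasDerivAt_id y).const_add 1).rpow_const (Or.inl h1y.ne')
    have hd3 : HasDerivAt (fun y : ℝ => (1 - y) ^ (2 * H))
        ((-1) * (2 * H) * (1 - y) ^ (2 * H - 1)) y :=
      ((hasDerivAt_id y).const_sub 1).rpow_const (Or.inl h1y'.ne')
    have hdF : HasDerivAt F
        (2 * (2 * H * y ^ (2 * H - 1)) - 1 * (2 * H) * (1 + y) ^ (2 * H - 1)
          - (-1) * (2 * H) * (1 - y) ^ (2 * H - 1)) y := by
      exact (((hd1.const_mul 2).const_add 2).sub hd2).sub hd3
    rw [hdF.deriv]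
    have hkey := subfBm_aux_key2 (γ := 2 * H - 1) (y := y) (by linarith) hy0 hy1
    nlinarith [hkey, hH0]
  have hF0 : F 0 = 0 := by
    have h0 : (0:ℝ) ^ (2 * H) = 0 := Real.zero_rpow (by positivity)
    simp [hFdef, h0]
    norm_num
  have := hmono (left_mem_Icc.2 (by norm_num)) ⟨hx0.le, hx1⟩ hx0
  rw [hF0] at this
  simp only [hFdef] at this
  linarith

/-- Derivative of the covariance function at `t > 0`. -/
lemma subfBm_aux_hasDerivAt (H t : ℝ) (ht : 0 < t) :
    HasDerivAt (fun t => Real.exp (H * t) *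
      (Real.exp (-(2 * H * t)) + 1 -
        (1 / 2) * ((1 + Real.exp (-t)) ^ (2 * H) + (1 - Real.exp (-t)) ^ (2 * H))))
      (H * Real.exp (H * t) *
        (1 - Real.exp (-t) ^ (2 * H) -
          (1 / 2) * ((1 + Real.exp (-t)) ^ (2 * H - 1) * (1 - Real.exp (-t)) +
            (1 - Real.exp (-t)) ^ (2 * H - 1) * (1 + Real.exp (-t))))) t := by
  have hx0 : (0:ℝ) < Real.exp (-t) := Real.exp_pos _
  have hx1 : Real.exp (-t) < 1 := by
    rw [Real.exp_lt_one_iff]; linarith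
  have h1x : (0:ℝ) < 1 + Real.exp (-t) := by linarith
  have h1x' : (0:ℝ) < 1 - Real.exp (-t) := by linarith
  have hde : HasDerivAt (fun t : ℝ => Real.exp (-t)) (-Real.exp (-t)) t := by
    simpa using ((hasDerivAt_id t).neg).exp
  have hA : HasDerivAt (fun t : ℝ => Real.exp (H * t)) (H * Real.exp (H * t)) t := by
    simpa [mul_comm] using (((hasDerivAt_id t).const_mul H)).exp
  have hB : HasDerivAt (fun t : ℝ => Real.exp (-(2 * H * t)))
      (-(2 * H) * Real.exp (-(2 * H * t))) t := by
    have := (((hasDerivAt_id t).const_mul (-(2 * H)))).exp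
    simp only [mul_one, neg_mul] at this ⊢
    simpa [mul_comm] using this
  have hC : HasDerivAt (fun t : ℝ => (1 + Real.exp (-t)) ^ (2 * H))
      ((-Real.exp (-t)) * (2 * H) * (1 + Real.exp (-t)) ^ (2 * H - 1)) t :=
    (hde.const_add 1).rpow_const (Or.inl h1x.ne')
  have hD : HasDerivAt (fun t : ℝ => (1 - Real.exp (-t)) ^ (2 * H))
      (Real.exp (-t) * (2 * H) * (1 - Real.exp (-t)) ^ (2 * H - 1)) t := by
    have := (hde.const_sub 1).rpow_const (p := 2 * H) (Or.inl h1x'.ne')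
    simpa using this
  have hInner : HasDerivAt (fun t : ℝ => Real.exp (-(2 * H * t)) + 1 -
      (1 / 2) * ((1 + Real.exp (-t)) ^ (2 * H) + (1 - Real.exp (-t)) ^ (2 * H)))
      (-(2 * H) * Real.exp (-(2 * H * t)) -
        (1 / 2) * ((-Real.exp (-t)) * (2 * H) * (1 + Real.exp (-t)) ^ (2 * H - 1) +
          Real.exp (-t) * (2 * H) * (1 - Real.exp (-t)) ^ (2 * H - 1))) t :=
    (hB.add_const 1).sub ((hC.add hD).const_mul (1 / 2))
  have hfull := hA.mul hInner
  refine hfull.congr_deriv ?_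
  have hG : Real.exp (-(2 * H * t)) = Real.exp (-t) ^ (2 * H) := by
    rw [← Real.exp_mul]; ring_nf
  have hP : (1 + Real.exp (-t)) ^ (2 * H)
      = (1 + Real.exp (-t)) ^ (2 * H - 1) * (1 + Real.exp (-t)) := by
    have h : 2 * H - 1 + 1 = 2 * H := by ring
    rw [← Real.rpow_add_one h1x.ne' (2 * H - 1), h]
  have hQ : (1 - Real.exp (-t)) ^ (2 * H)
      = (1 - Real.exp (-t)) ^ (2 * H - 1) * (1 - Real.exp (-t)) := by
    have h : 2 * H - 1 + 1 = 2 * H := by ring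
    rw [← Real.rpow_add_one h1x'.ne' (2 * H - 1), h]
  rw [hG, hP, hQ]
  ring

/-- For `H ∈ (0,1)`, the function
`r(t) = e^{Ht}[e^{-2Ht} + 1 - (1/2)((1+e^{-t})^{2H} + (1-e^{-t})^{2H})]` is
positive on `[0,∞)` and strictly decreasing on `(0,∞)`. -/
theorem subfBm_covariance_pos_strictAnti (H : ℝ) (hH : H ∈ Set.Ioo (0:ℝ) 1)
    (r : ℝ → ℝ)
    (hr : ∀ t, r t = Real.exp (H * t) *
      (Real.exp (-(2 * H * t)) + 1 -
        (1 / 2) * ((1 + Real.exp (-t)) ^ (2 * H) + (1 - Real.exp (-t)) ^ (2 * H)))) :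
    (∀ t, 0 ≤ t → 0 < r t) ∧ StrictAntiOn r (Set.Ioi 0) := by
  obtain ⟨hH0, hH1⟩ := hH
  have hrf : r = fun t => Real.exp (H * t) *
      (Real.exp (-(2 * H * t)) + 1 -
        (1 / 2) * ((1 + Real.exp (-t)) ^ (2 * H) + (1 - Real.exp (-t)) ^ (2 * H))) :=
    funext hr
  constructor
  · -- positivity
    intro t ht
    rcases eq_or_lt_of_le ht with h0 | htpos
    · -- t = 0
      rw [← h0, hr 0]
      have h1 : Real.exp (H * 0) = 1 := by norm_num
      have h2 : Real.exp (-(2 * H * 0)) = 1 := by norm_num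
      have h3 : Real.exp (-(0:ℝ)) = 1 := by norm_num
      rw [h1, h2, h3]
      have h4 : (1 - (1:ℝ)) ^ (2 * H) = 0 := by
        norm_num
        exact Real.zero_rpow (by positivity)
      have h5 : (1 + (1:ℝ)) ^ (2 * H) < 4 := by
        have h6 : (1 + (1:ℝ)) = 2 := by norm_num
        rw [h6]
        calc (2:ℝ) ^ (2 * H) < 2 ^ (2:ℝ) :=
              Real.rpow_lt_rpow_of_exponent_lt (by norm_num) (by linarith)
        _ = 4 := by rw [Real.rpow_two]; norm_num
      rw [h4]
      set X := (1 + (1:ℝ)) ^ (2 * H) with hX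
      linarith
    · -- t > 0
      rw [hr t]
      have hx0 : (0:ℝ) < Real.exp (-t) := Real.exp_pos _
      have hx1 : Real.exp (-t) < 1 := by rw [Real.exp_lt_one_iff]; linarith
      have hG : Real.exp (-(2 * H * t)) = Real.exp (-t) ^ (2 * H) := by
        rw [← Real.exp_mul]; ring_nf
      have hF := subfBm_aux_Fpos hH0 hH1 hx0 hx1.le
      rw [hG]
      have hpos : (0:ℝ) < Real.exp (-t) ^ (2 * H) + 1 -
          (1 / 2) * ((1 + Real.exp (-t)) ^ (2 * H) + (1 - Real.exp (-t)) ^ (2 * H)) := by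
        linarith
      exact mul_pos (Real.exp_pos _) hpos
  · -- strict antitonicity
    apply strictAntiOn_of_deriv_neg (convex_Ioi 0)
    · -- continuity on Ioi 0
      intro t ht
      rw [hrf]
      exact (subfBm_aux_hasDerivAt H t ht).continuousAt.continuousWithinAt
    · intro t ht
      rw [interior_Ioi, Set.mem_Ioi] at ht
      have hd := subfBm_aux_hasDerivAt H t ht
      rw [hrf, hd.deriv]
      have hx0 : (0:ℝ) < Real.exp (-t) := Real.exp_pos _
      have hx1 : Real.exp (-t) < 1 := by rw [Real.exp_lt_one_iff]; linarith
      have hcore := subfBm_aux_core hH0 hH1 hx0 hx1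
      have hEpos : (0:ℝ) < H * Real.exp (H * t) := mul_pos hH0 (Real.exp_pos _)
      have hbr : 1 - Real.exp (-t) ^ (2 * H) -
          (1 / 2) * ((1 + Real.exp (-t)) ^ (2 * H - 1) * (1 - Real.exp (-t)) +
            (1 - Real.exp (-t)) ^ (2 * H - 1) * (1 + Real.exp (-t))) < 0 := by
        linarith
      exact mul_neg_of_pos_of_neg hEpos hbr
end

section
/- For H ∈ (0,1), define r(t) = e^{Ht}[e^{-2Ht} + 1 − (1/2)((1+e^{-t})^{2H} + (1−e^{-t})^{2H})] for t > 0. Then r'(t) = −(H/2) e^{Ht} (1 − e^{-2t})^{2H−1} [(1 + e^{-t})^{1−H} − (1 − e^{-t})^{1−H}]² + H e^{Ht}[1 − e^{-2Ht} − (1−e^{-2t})^H] and in particular r'(t) < 0, using that 1 − e^{-2Ht} ≤ (1 − e^{-2t})^H for H ∈ (0,1) and t > 0. -/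
set_option maxHeartbeats 1000000

/-- For `H ∈ (0,1)` and `t > 0`, the function
`r(t) = e^{Ht}[e^{-2Ht} + 1 - (1/2)((1+e^{-t})^{2H} + (1-e^{-t})^{2H})]` has derivative
`r'(t) = -(H/2) e^{Ht} (1-e^{-2t})^{2H-1} [(1+e^{-t})^{1-H} - (1-e^{-t})^{1-H}]²
  + H e^{Ht} [1 - e^{-2Ht} - (1-e^{-2t})^H]`, which is negative. -/
theorem subfBm_covariance_deriv (H : ℝ) (hH : H ∈ Set.Ioo (0:ℝ) 1)
    (r : ℝ → ℝ)
    (hr : ∀ t, r t = Real.exp (H * t) *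
      (Real.exp (-(2 * H * t)) + 1 -
        (1 / 2) * ((1 + Real.exp (-t)) ^ (2 * H) + (1 - Real.exp (-t)) ^ (2 * H))))
    (t : ℝ) (ht : 0 < t) :
    HasDerivAt r
      (-(H / 2) * Real.exp (H * t) * (1 - Real.exp (-(2 * t))) ^ (2 * H - 1) *
          ((1 + Real.exp (-t)) ^ (1 - H) - (1 - Real.exp (-t)) ^ (1 - H)) ^ 2 +
        H * Real.exp (H * t) *
          (1 - Real.exp (-(2 * H * t)) - (1 - Real.exp (-(2 * t))) ^ H)) t ∧
    (-(H / 2) * Real.exp (H * t) * (1 - Real.exp (-(2 * t))) ^ (2 * H - 1) *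
          ((1 + Real.exp (-t)) ^ (1 - H) - (1 - Real.exp (-t)) ^ (1 - H)) ^ 2 +
        H * Real.exp (H * t) *
          (1 - Real.exp (-(2 * H * t)) - (1 - Real.exp (-(2 * t))) ^ H)) < 0 := by
  obtain ⟨hH0, hH1⟩ := hH
  set a : ℝ := Real.exp (-t) with ha
  have ha0 : 0 < a := Real.exp_pos _
  have ha1 : a < 1 := by
    rw [ha, Real.exp_lt_one_iff]; linarith
  have h1a : (0:ℝ) < 1 - a := by linarith
  have h1a' : (0:ℝ) < 1 + a := by linarith
  have hsq : (0:ℝ) < 1 - a * a := by nlinarith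
  -- basic exponential identities
  have e2t : Real.exp (-(2 * t)) = a * a := by
    rw [ha, ← Real.exp_add]; ring_nf
  have e2Ht : Real.exp (-(2 * H * t)) = a ^ (2 * H) := by
    rw [ha, ← Real.exp_mul]; ring_nf
  have hfac : 1 - Real.exp (-(2 * t)) = (1 + a) * (1 - a) := by rw [e2t]; ring
  -- derivative of the components
  have hd1 : HasDerivAt (fun s : ℝ => Real.exp (H * s)) (H * Real.exp (H * t)) t := by
    simpa [mul_comm] using ((hasDerivAt_id t).const_mul H).exp
  have hdE : HasDerivAt (fun s : ℝ => Real.exp (-(2 * H * s)))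
      (-(2 * H) * Real.exp (-(2 * H * t))) t := by
    simpa [mul_comm] using (((hasDerivAt_id t).const_mul (2 * H)).neg).exp
  have hda : HasDerivAt (fun s : ℝ => Real.exp (-s)) (-a) t := by
    simpa using ((hasDerivAt_id t).neg).exp
  have hdA : HasDerivAt (fun s : ℝ => (1 + Real.exp (-s)) ^ (2 * H))
      (-a * (2 * H) * (1 + a) ^ (2 * H - 1)) t := by
    exact (hda.const_add 1).rpow_const (Or.inl (ne_of_gt h1a'))
  have hdB : HasDerivAt (fun s : ℝ => (1 - Real.exp (-s)) ^ (2 * H))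
      (a * (2 * H) * (1 - a) ^ (2 * H - 1)) t := by
    have := (hda.const_sub 1).rpow_const (p := 2 * H) (Or.inl (ne_of_gt h1a))
    simpa using this
  have hdg : HasDerivAt (fun s : ℝ => Real.exp (-(2 * H * s)) + 1 -
      (1 / 2) * ((1 + Real.exp (-s)) ^ (2 * H) + (1 - Real.exp (-s)) ^ (2 * H)))
      ((-(2 * H) * Real.exp (-(2 * H * t))) -
        (1 / 2) * ((-a * (2 * H) * (1 + a) ^ (2 * H - 1)) +
          (a * (2 * H) * (1 - a) ^ (2 * H - 1)))) t := by
    have := ((hdE.add_const 1).sub ((hdA.add hdB).const_mul (1 / 2)))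
    exact this.congr_deriv (by ring)
  have hR : HasDerivAt r
      (H * Real.exp (H * t) * (Real.exp (-(2 * H * t)) + 1 -
        (1 / 2) * ((1 + a) ^ (2 * H) + (1 - a) ^ (2 * H))) +
       Real.exp (H * t) * ((-(2 * H) * Real.exp (-(2 * H * t))) -
        (1 / 2) * ((-a * (2 * H) * (1 + a) ^ (2 * H - 1)) +
          (a * (2 * H) * (1 - a) ^ (2 * H - 1))))) t := by
    have hfun : r = fun s : ℝ => Real.exp (H * s) *
        (Real.exp (-(2 * H * s)) + 1 -
          (1 / 2) * ((1 + Real.exp (-s)) ^ (2 * H) + (1 - Real.exp (-s)) ^ (2 * H))) :=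
      funext hr
    rw [hfun]
    exact hd1.mul hdg
  -- rpow algebra: set abbreviations
  set P : ℝ := (1 + a) ^ (2 * H - 1) with hP
  set Q : ℝ := (1 - a) ^ (2 * H - 1) with hQ
  have hPpos : 0 < P := Real.rpow_pos_of_pos h1a' _
  have hQpos : 0 < Q := Real.rpow_pos_of_pos h1a _
  have hS : (1 - Real.exp (-(2 * t))) ^ (2 * H - 1) = P * Q := by
    rw [hfac, Real.mul_rpow h1a'.le h1a.le]
  -- expand the square times P*Q
  have hAP : (1 + a) ^ (1 - H) * (1 + a) ^ (1 - H) * P = 1 + a := by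
    rw [hP, ← Real.rpow_add h1a', ← Real.rpow_add h1a',
      show 1 - H + (1 - H) + (2 * H - 1) = (1:ℝ) by ring, Real.rpow_one]
  have hBQ : (1 - a) ^ (1 - H) * (1 - a) ^ (1 - H) * Q = 1 - a := by
    rw [hQ, ← Real.rpow_add h1a, ← Real.rpow_add h1a,
      show 1 - H + (1 - H) + (2 * H - 1) = (1:ℝ) by ring, Real.rpow_one]
  have hAB : (1 + a) ^ (1 - H) * (1 - a) ^ (1 - H) * (P * Q) = (1 - a * a) ^ H := by
    rw [hP, hQ]
    have : (1 + a) ^ (1 - H) * (1 - a) ^ (1 - H) * ((1 + a) ^ (2 * H - 1) * (1 - a) ^ (2 * H - 1))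
        = ((1 + a) ^ ((1 - H) + (2 * H - 1))) * ((1 - a) ^ ((1 - H) + (2 * H - 1))) := by
      rw [Real.rpow_add h1a', Real.rpow_add h1a]; ring
    rw [this]
    have hHe : (1 - H) + (2 * H - 1) = H := by ring
    rw [hHe, ← Real.mul_rpow h1a'.le h1a.le]
    ring_nf
  have hA2H : (1 + a) ^ (2 * H) = (1 + a) * P := by
    rw [hP, show 2 * H = (1:ℝ) + (2 * H - 1) by ring, Real.rpow_add h1a', Real.rpow_one]
    norm_num
  have hB2H : (1 - a) ^ (2 * H) = (1 - a) * Q := by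
    rw [hQ, show 2 * H = (1:ℝ) + (2 * H - 1) by ring, Real.rpow_add h1a, Real.rpow_one]
    norm_num
  have hfacH : (1 - Real.exp (-(2 * t))) ^ H = (1 - a * a) ^ H := by
    rw [e2t]
  -- identity between target derivative and the computed one
  have hsqexp : ((1 + a) ^ (1 - H) - (1 - a) ^ (1 - H)) ^ 2 * (P * Q)
      = (1 + a) * Q + (1 - a) * P - 2 * (1 - a * a) ^ H := by
    have expand : ((1 + a) ^ (1 - H) - (1 - a) ^ (1 - H)) ^ 2 * (P * Q)
        = ((1 + a) ^ (1 - H) * (1 + a) ^ (1 - H) * P) * Q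
          + ((1 - a) ^ (1 - H) * (1 - a) ^ (1 - H) * Q) * P
          - 2 * ((1 + a) ^ (1 - H) * (1 - a) ^ (1 - H) * (P * Q)) := by ring
    rw [expand, hAP, hBQ, hAB]
  have hEq : (-(H / 2) * Real.exp (H * t) * (1 - Real.exp (-(2 * t))) ^ (2 * H - 1) *
          ((1 + Real.exp (-t)) ^ (1 - H) - (1 - Real.exp (-t)) ^ (1 - H)) ^ 2 +
        H * Real.exp (H * t) *
          (1 - Real.exp (-(2 * H * t)) - (1 - Real.exp (-(2 * t))) ^ H))
      = (H * Real.exp (H * t) * (Real.exp (-(2 * H * t)) + 1 -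
        (1 / 2) * ((1 + a) ^ (2 * H) + (1 - a) ^ (2 * H))) +
       Real.exp (H * t) * ((-(2 * H) * Real.exp (-(2 * H * t))) -
        (1 / 2) * ((-a * (2 * H) * (1 + a) ^ (2 * H - 1)) +
          (a * (2 * H) * (1 - a) ^ (2 * H - 1))))) := by
    rw [hS, hfacH, hA2H, hB2H, ← hP, ← hQ]
    rw [show -(H / 2) * Real.exp (H * t) * (P * Q) *
        ((1 + a) ^ (1 - H) - (1 - a) ^ (1 - H)) ^ 2
      = -(H / 2) * Real.exp (H * t) *
        (((1 + a) ^ (1 - H) - (1 - a) ^ (1 - H)) ^ 2 * (P * Q)) by ring, hsqexp]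
    ring
  constructor
  · rw [hEq]; exact hR
  · rw [hEq, ← hEq]
    have hEt : 0 < Real.exp (H * t) := Real.exp_pos _
    have hPQ : 0 < (1 - Real.exp (-(2 * t))) ^ (2 * H - 1) := by
      rw [hS]; exact mul_pos hPpos hQpos
    have hmono : (1 - a) ^ (1 - H) < (1 + a) ^ (1 - H) :=
      Real.rpow_lt_rpow h1a.le (by linarith) (by linarith)
    have hsq2 : 0 < ((1 + a) ^ (1 - H) - (1 - a) ^ (1 - H)) ^ 2 :=
      pow_pos (by linarith) 2
    have hpos : 0 < (H / 2) * Real.exp (H * t) * (1 - Real.exp (-(2 * t))) ^ (2 * H - 1) *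
        ((1 + a) ^ (1 - H) - (1 - a) ^ (1 - H)) ^ 2 :=
      mul_pos (mul_pos (mul_pos (by linarith) hEt) hPQ) hsq2
    have hterm1 : -(H / 2) * Real.exp (H * t) * (1 - Real.exp (-(2 * t))) ^ (2 * H - 1) *
        ((1 + a) ^ (1 - H) - (1 - a) ^ (1 - H)) ^ 2 < 0 := by linarith
    have hterm2 : 1 - Real.exp (-(2 * H * t)) - (1 - Real.exp (-(2 * t))) ^ H ≤ 0 := by
      rw [e2Ht, hfacH]
      have h1 : a * a ≤ (a * a) ^ H := by
        calc a * a = (a * a) ^ (1:ℝ) := by rw [Real.rpow_one]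
        _ ≤ (a * a) ^ H := Real.rpow_le_rpow_of_exponent_ge (by positivity) (by nlinarith)
          (by linarith)
      have h2 : 1 - a * a ≤ (1 - a * a) ^ H := by
        calc 1 - a * a = (1 - a * a) ^ (1:ℝ) := by rw [Real.rpow_one]
        _ ≤ (1 - a * a) ^ H := Real.rpow_le_rpow_of_exponent_ge hsq (by nlinarith)
          (by linarith)
      have haH : a ^ (2 * H) = (a * a) ^ H := by
        rw [show a * a = a ^ (2:ℝ) by
            rw [show (2:ℝ) = ((2:ℕ):ℝ) by norm_num, Real.rpow_natCast]; ring,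
          ← Real.rpow_mul ha0.le]
      rw [haH]
      linarith
    have hterm2' : H * Real.exp (H * t) *
        (1 - Real.exp (-(2 * H * t)) - (1 - Real.exp (-(2 * t))) ^ H) ≤ 0 :=
      mul_nonpos_of_nonneg_of_nonpos (by positivity) hterm2
    linarith
end

section
/- Let H₀ ∈ (0,1), K₀ ∈ (0,1], and r(t) = (e^{H₀K₀ t}/2^{K₀})[(1+e^{-2H₀ t})^{K₀} − (1−e^{-t})^{2H₀K₀}]. Then for all t > 0, r'(t) = (H₀K₀/2^{K₀}) e^{H₀K₀ t} [(1+e^{-2H₀t})^{K₀−1}(1−e^{-2H₀t}) − (1+e^{-t})(1−e^{-t})^{2H₀K₀−1}] and r'(t) < 0, using the chain of bounds (1+e^{-2H₀t})^{K₀−1}(1−e^{-2H₀t}) ≤ 1−e^{-2t} < (1+e^{-t})(1−e^{-t})^{2H₀K₀−1}. -/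
/-- For `H₀ ∈ (0,1)`, `K₀ ∈ (0,1]` and `t > 0`, the function
`r(t) = (e^{H₀K₀t}/2^{K₀})[(1+e^{-2H₀t})^{K₀} - (1-e^{-t})^{2H₀K₀}]` has derivative
`r'(t) = (H₀K₀/2^{K₀}) e^{H₀K₀t} [(1+e^{-2H₀t})^{K₀-1}(1-e^{-2H₀t})
  - (1+e^{-t})(1-e^{-t})^{2H₀K₀-1}]`, which is negative. -/
theorem bifBm_covariance_deriv (H₀ K₀ : ℝ)
    (hH₀ : H₀ ∈ Set.Ioo (0:ℝ) 1) (hK₀ : K₀ ∈ Set.Ioc (0:ℝ) 1)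
    (r : ℝ → ℝ)
    (hr : ∀ t, r t = Real.exp (H₀ * K₀ * t) / 2 ^ K₀ *
      ((1 + Real.exp (-(2 * H₀ * t))) ^ K₀ - (1 - Real.exp (-t)) ^ (2 * H₀ * K₀)))
    (t : ℝ) (ht : 0 < t) :
    HasDerivAt r
      (H₀ * K₀ / 2 ^ K₀ * Real.exp (H₀ * K₀ * t) *
        ((1 + Real.exp (-(2 * H₀ * t))) ^ (K₀ - 1) * (1 - Real.exp (-(2 * H₀ * t))) -
          (1 + Real.exp (-t)) * (1 - Real.exp (-t)) ^ (2 * H₀ * K₀ - 1))) t ∧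
    (H₀ * K₀ / 2 ^ K₀ * Real.exp (H₀ * K₀ * t) *
        ((1 + Real.exp (-(2 * H₀ * t))) ^ (K₀ - 1) * (1 - Real.exp (-(2 * H₀ * t))) -
          (1 + Real.exp (-t)) * (1 - Real.exp (-t)) ^ (2 * H₀ * K₀ - 1))) < 0 := by
  obtain ⟨hH0, hH1⟩ := hH₀
  obtain ⟨hK0, hK1⟩ := hK₀
  set u := Real.exp (-(2 * H₀ * t)) with hu_def
  set w := Real.exp (-t) with hw_def
  have hu_pos : 0 < u := Real.exp_pos _
  have hw_pos : 0 < w := Real.exp_pos _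
  have hu1 : u < 1 := by
    rw [hu_def]
    exact Real.exp_lt_one_iff.mpr (by nlinarith)
  have hw1 : w < 1 := by
    rw [hw_def]
    exact Real.exp_lt_one_iff.mpr (by linarith)
  have h1u : (0:ℝ) < 1 + u := by linarith
  have hv : (0:ℝ) < 1 - w := by linarith
  -- derivative
  have hE : HasDerivAt (fun s => Real.exp (H₀ * K₀ * s)) (H₀ * K₀ * Real.exp (H₀ * K₀ * t)) t := by
    have h := ((hasDerivAt_id t).const_mul (H₀ * K₀)).exp
    simpa [mul_comm] using h
  have hinner1 : HasDerivAt (fun s => 1 + Real.exp (-(2 * H₀ * s))) (-(2 * H₀) * u) t := by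
    have h := (((hasDerivAt_id t).const_mul (2 * H₀)).neg).exp
    simpa [hu_def, mul_comm] using h.const_add 1
  have hinner2 : HasDerivAt (fun s => 1 - Real.exp (-s)) w t := by
    have h := ((hasDerivAt_id t).neg).exp
    simpa using h.const_sub 1
  have hf : HasDerivAt (fun s => (1 + Real.exp (-(2 * H₀ * s))) ^ K₀)
      (-(2 * H₀) * u * K₀ * (1 + u) ^ (K₀ - 1)) t :=
    hinner1.rpow_const (Or.inl (ne_of_gt h1u))
  have hg : HasDerivAt (fun s => (1 - Real.exp (-s)) ^ (2 * H₀ * K₀))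
      (w * (2 * H₀ * K₀) * (1 - w) ^ (2 * H₀ * K₀ - 1)) t :=
    hinner2.rpow_const (Or.inl (ne_of_gt hv))
  have hD : HasDerivAt r
      (H₀ * K₀ * Real.exp (H₀ * K₀ * t) / 2 ^ K₀ * ((1 + u) ^ K₀ - (1 - w) ^ (2 * H₀ * K₀))
        + Real.exp (H₀ * K₀ * t) / 2 ^ K₀ *
          (-(2 * H₀) * u * K₀ * (1 + u) ^ (K₀ - 1)
            - w * (2 * H₀ * K₀) * (1 - w) ^ (2 * H₀ * K₀ - 1))) t := by
    have h := (hE.div_const ((2:ℝ) ^ K₀)).mul (hf.sub hg)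
    have heq : r = fun s => Real.exp (H₀ * K₀ * s) / 2 ^ K₀ *
        ((1 + Real.exp (-(2 * H₀ * s))) ^ K₀ - (1 - Real.exp (-s)) ^ (2 * H₀ * K₀)) :=
      funext hr
    rw [heq]
    exact h
  have hrw1 : (1 + u) ^ K₀ = (1 + u) ^ (K₀ - 1) * (1 + u) := by
    rw [← Real.rpow_add_one (ne_of_gt h1u), sub_add_cancel]
  have hrw2 : (1 - w) ^ (2 * H₀ * K₀) = (1 - w) ^ (2 * H₀ * K₀ - 1) * (1 - w) := by
    rw [← Real.rpow_add_one (ne_of_gt hv), sub_add_cancel]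
  constructor
  · convert hD using 1
    rw [hrw1, hrw2]
    field_simp
    ring
  · -- negativity
    have hcoef : 0 < H₀ * K₀ / 2 ^ K₀ * Real.exp (H₀ * K₀ * t) :=
      mul_pos (div_pos (mul_pos hH0 hK0) (Real.rpow_pos_of_pos two_pos K₀)) (Real.exp_pos _)
    have h2 : (1 + u) ^ (K₀ - 1) ≤ 1 :=
      Real.rpow_le_one_of_one_le_of_nonpos (by linarith) (by linarith)
    have hA : (1 + u) ^ (K₀ - 1) * (1 - u) ≤ 1 - u := by
      nlinarith [Real.rpow_pos_of_pos h1u (K₀ - 1)]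
    have huw : w * w ≤ u := by
      rw [hu_def, hw_def, ← Real.exp_add]
      exact Real.exp_le_exp.mpr (by nlinarith)
    have hvv : (1 - w : ℝ) < (1 - w) ^ (2 * H₀ * K₀ - 1) := by
      have := Real.rpow_lt_rpow_of_exponent_gt hv (by linarith) (show 2 * H₀ * K₀ - 1 < 1 by nlinarith)
      simpa using this
    have hB : (1 + w) * (1 - w) < (1 + w) * (1 - w) ^ (2 * H₀ * K₀ - 1) :=
      mul_lt_mul_of_pos_left hvv (by linarith)
    have hchain : (1 + u) ^ (K₀ - 1) * (1 - u) < (1 + w) * (1 - w) ^ (2 * H₀ * K₀ - 1) := by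
      nlinarith
    exact mul_neg_of_pos_of_neg hcoef (by linarith)
end
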